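/- Let Φ = (φ_n)_{n∈ℕ} be the greatest depth-bounded fuzzy auto-bisimulation of a fuzzy automaton A. Then each φ_n is a fuzzy equivalence: reflexive (id_A ≤ φ_n), symmetric (φ_n = φ_n⁻¹), and transitive (φ_n ∘ φ_n ≤ φ_n). -/
import Mathlib


/-- A complete residuated lattice: a complete lattice where `⟨L, *, 1⟩` is a
commutative monoid with unit `1 = ⊤`, and the adjunction property holds. -/
class CompleteResiduatedLattice (L : Type*) extends CompleteLattice L, CommMonoid L where
  rimp : L → L → L
  adjunction : ∀ x y z : L, x * y ≤ z ↔ x ≤ rimp y z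
  one_eq_top : (1 : L) = ⊤

open CompleteResiduatedLattice

/-- A fuzzy automaton over alphabet `S` with state set `A`:
fuzzy transition function `δ`, fuzzy set of initial states `σ`,
fuzzy set of terminal states `τ`. -/
structure FuzzyAutomaton (L : Type*) [CompleteResiduatedLattice L] (S A : Type*) where
  δ : S → A → A → L
  σ : A → L
  τ : A → L

variable {L : Type*} [CompleteResiduatedLattice L]

/-- `(φ_n)_{n∈ℕ}` is a depth-bounded fuzzy simulation between `M` and `M'`:
(1) the sequence is decreasing; (2) `φ₀⁻¹ ∘ τ ≤ τ'`;
(3) `φ_n⁻¹ ∘ δ_s ≤ δ'_s ∘ φ_{n-1}⁻¹` for `n ≥ 1`. -/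
def IsDBFS {S A A' : Type*} (M : FuzzyAutomaton L S A) (M' : FuzzyAutomaton L S A')
    (φ : ℕ → A → A' → L) : Prop :=
  (∀ n x x', φ (n + 1) x x' ≤ φ n x x') ∧
  (∀ x', (⨆ x, φ 0 x x' * M.τ x) ≤ M'.τ x') ∧
  (∀ s n x' y, (⨆ x, φ (n + 1) x x' * M.δ s x y) ≤ ⨆ y', M'.δ s x' y' * φ n y y')

/-- `(φ_n)_{n∈ℕ}` is a depth-bounded fuzzy bisimulation between `M` and `M'`:
it is a depth-bounded fuzzy simulation and additionally `φ₀ ∘ τ' ≤ τ` and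
`φ_n ∘ δ'_s ≤ δ_s ∘ φ_{n-1}` for all `s` and `n ≥ 1`. -/
def IsDBFB {S A A' : Type*} (M : FuzzyAutomaton L S A) (M' : FuzzyAutomaton L S A')
    (φ : ℕ → A → A' → L) : Prop :=
  IsDBFS M M' φ ∧
  (∀ x, (⨆ x', φ 0 x x' * M'.τ x') ≤ M.τ x) ∧
  (∀ s n x y', (⨆ x', φ (n + 1) x x' * M'.δ s x' y') ≤ ⨆ y, M.δ s x y * φ n y y')

lemma crl_mul_le_mul_right {a b : L} (h : a ≤ b) (c : L) : a * c ≤ b * c :=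
  (adjunction a c (b * c)).mpr (h.trans ((adjunction b c (b * c)).mp le_rfl))

lemma crl_mul_le_mul {a b c d : L} (h1 : a ≤ b) (h2 : c ≤ d) : a * c ≤ b * d :=
  (crl_mul_le_mul_right h1 c).trans
    (by rw [mul_comm b c, mul_comm b d]; exact crl_mul_le_mul_right h2 b)

lemma crl_iSup_mul {ι : Sort*} (f : ι → L) (a : L) : (⨆ i, f i) * a = ⨆ i, f i * a :=
  le_antisymm
    ((adjunction _ _ _).mpr (iSup_le fun i =>
      (adjunction _ _ _).mp (le_iSup (fun i => f i * a) i)))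
    (iSup_le fun i => crl_mul_le_mul_right (le_iSup f i) a)

lemma crl_mul_iSup {ι : Sort*} (a : L) (f : ι → L) : (a * ⨆ i, f i) = ⨆ i, a * f i := by
  rw [mul_comm, crl_iSup_mul]
  exact iSup_congr fun i => mul_comm _ _

lemma crl_iSup_const {p : Prop} (hp : p) (a : L) : (⨆ _ : p, a) = a :=
  le_antisymm (iSup_le fun _ => le_rfl) (le_iSup (fun _ : p => a) hp)

lemma crl_iSup_mul_le {ι : Sort*} {f : ι → L} {a c : L} (h : ∀ i, f i * a ≤ c) :
    (⨆ i, f i) * a ≤ c :=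
  (adjunction _ _ _).mpr (iSup_le fun i => (adjunction _ _ _).mp (h i))

lemma symm_IsDBFB {S A : Type*} (M : FuzzyAutomaton L S A) (φ : ℕ → A → A → L)
    (hs : ∀ n x y, φ n x y = φ n y x) (h : IsDBFS M M φ) : IsDBFB M M φ := by
  refine ⟨h, fun x => ?_, fun s n x y' => ?_⟩
  · exact le_trans (le_of_eq (iSup_congr fun x' => by rw [hs 0 x x'])) (h.2.1 x)
  · exact le_trans (le_of_eq (iSup_congr fun x' => by rw [hs (n + 1) x x']))
      ((h.2.2 s n x y').trans (le_of_eq (iSup_congr fun b => by rw [hs n y' b])))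

theorem stmt16 {S A : Type*} [Nonempty A]
    (M : FuzzyAutomaton L S A) (G : ℕ → A → A → L)
    (hG : IsDBFB M M G)
    (hGreatest : ∀ Φ : ℕ → A → A → L, IsDBFB M M Φ → ∀ n x x', Φ n x x' ≤ G n x x')
    (n : ℕ) :
    (∀ x, (1 : L) ≤ G n x x) ∧ (∀ x y, G n x y = G n y x) ∧
      (∀ x z, (⨆ y, G n x y * G n y z) ≤ G n x z) := by
  obtain ⟨⟨hdec, hτ, hδ⟩, hτ', hδ'⟩ := hG
  -- Symmetry, via the inverse sequence
  have hΦ : IsDBFB M M (fun n x y => G n y x) :=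
    ⟨⟨fun n x x' => hdec n x' x, fun x' => hτ' x', fun s n x' y => hδ' s n x' y⟩,
      fun x => hτ x, fun s n x y' => hδ s n x y'⟩
  have hsym : ∀ n x y, G n x y = G n y x := fun n x y =>
    le_antisymm (hGreatest _ hΦ n y x) (hGreatest _ hΦ n x y)
  -- Reflexivity, via the identity sequence
  have hEsym : ∀ (m : ℕ) (x y : A),
      (⨆ _ : x = y, (1 : L)) = ⨆ _ : y = x, (1 : L) := by
    intro m x y
    exact le_antisymm (iSup_le fun h => by subst h; exact (crl_iSup_const rfl _).ge)
      (iSup_le fun h => by subst h; exact (crl_iSup_const rfl _).ge)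
  have hE : IsDBFS M M (fun (_ : ℕ) x y => ⨆ _ : x = y, (1 : L)) := by
    refine ⟨fun n x x' => le_rfl, fun x' => ?_, fun s m x' y => ?_⟩
    · refine iSup_le fun x => crl_iSup_mul_le fun h => ?_
      subst h; rw [one_mul]
    · refine iSup_le fun x => crl_iSup_mul_le fun h => ?_
      subst h; rw [one_mul]
      refine le_trans ?_ (le_iSup (fun y' => M.δ s x y' * ⨆ _ : y = y', (1 : L)) y)
      rw [crl_iSup_const rfl, mul_one]
  have hrefl : ∀ m x, (1 : L) ≤ G m x x := fun m x =>
    le_trans (le_of_eq (crl_iSup_const rfl _).symm)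
      (hGreatest _ (symm_IsDBFB M _ hEsym hE) m x x)
  -- Transitivity, via the composed sequence
  have hΨsym : ∀ (m : ℕ) (x z : A),
      (⨆ y, G m x y * G m y z) = ⨆ y, G m z y * G m y x := fun m x z =>
    iSup_congr fun y => by rw [hsym m x y, hsym m y z, mul_comm]
  have hΨ : IsDBFS M M (fun m x z => ⨆ y, G m x y * G m y z) := by
    refine ⟨fun m x x' => iSup_mono fun y => crl_mul_le_mul (hdec m x y) (hdec m y x'),
      fun x' => ?_, fun s m x' y => ?_⟩
    · refine iSup_le fun x => crl_iSup_mul_le fun y => ?_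
      calc G 0 x y * G 0 y x' * M.τ x
          = G 0 y x' * (G 0 x y * M.τ x) := by rw [mul_comm (G 0 x y), mul_assoc]
        _ ≤ G 0 y x' * M.τ y :=
            crl_mul_le_mul le_rfl ((le_iSup (fun a => G 0 a y * M.τ a) x).trans (hτ y))
        _ ≤ M.τ x' := (le_iSup (fun a => G 0 a x' * M.τ a) y).trans (hτ x')
    · refine iSup_le fun x => crl_iSup_mul_le fun t => ?_
      calc G (m + 1) x t * G (m + 1) t x' * M.δ s x y
          = G (m + 1) t x' * (G (m + 1) x t * M.δ s x y) := by
            rw [mul_comm (G (m + 1) x t), mul_assoc]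
        _ ≤ G (m + 1) t x' * ⨆ u, M.δ s t u * G m y u :=
            crl_mul_le_mul le_rfl
              ((le_iSup (fun a => G (m + 1) a t * M.δ s a y) x).trans (hδ s m t y))
        _ = ⨆ u, G (m + 1) t x' * (M.δ s t u * G m y u) := crl_mul_iSup _ _
        _ ≤ ⨆ y', M.δ s x' y' * ⨆ u, G m y u * G m u y' := by
            refine iSup_le fun u => ?_
            calc G (m + 1) t x' * (M.δ s t u * G m y u)
                = G (m + 1) t x' * M.δ s t u * G m y u := (mul_assoc _ _ _).symm
              _ ≤ (⨆ v, M.δ s x' v * G m u v) * G m y u :=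
                  crl_mul_le_mul_right
                    ((le_iSup (fun a => G (m + 1) a x' * M.δ s a u) t).trans (hδ s m x' u)) _
              _ = ⨆ v, M.δ s x' v * G m u v * G m y u := crl_iSup_mul _ _
              _ ≤ ⨆ y', M.δ s x' y' * ⨆ u, G m y u * G m u y' := by
                  refine iSup_le fun v => ?_
                  calc M.δ s x' v * G m u v * G m y u
                      = M.δ s x' v * (G m y u * G m u v) := by
                        rw [mul_assoc, mul_comm (G m u v)]
                    _ ≤ M.δ s x' v * ⨆ u, G m y u * G m u v :=
                        crl_mul_le_mul le_rfl (le_iSup (fun u => G m y u * G m u v) u)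
                    _ ≤ _ := le_iSup (fun y' => M.δ s x' y' * ⨆ u, G m y u * G m u y') v
  exact ⟨hrefl n, hsym n,
    fun x z => hGreatest _ (symm_IsDBFB M _ hΨsym hΨ) n x z⟩
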